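/- (Long-regression weight identities.) Assume positivity and that the covariance matrix of (D,A) is positive definite. Then the long-regression weights satisfy Σ_{a∈𝒜} ω_dce^l(a) = 1, Σ_{a∈𝒜} ω_ind^l(a) = 0, and Σ_{a∈𝒜} a_u·ω_ind^l(a) = 0 for every coordinate u = 1,…,K. -/

import Mathlib

open MeasureTheory ProbabilityTheory BigOperators

noncomputable section

variable {Ω : Type} [MeasurableSpace Ω] {K : ℕ}

/-- Expectation of a real-valued random variable. -/
def Exp (P : Measure Ω) (Z : Ω → ℝ) : ℝ := ∫ ω, Z ω ∂P

/-- Probability of an event, as a real number. -/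
def Pr (P : Measure Ω) (s : Set Ω) : ℝ := (P s).toReal

/-- Conditional expectation given an event, defined as a ratio. -/
def CE (P : Measure Ω) (Z : Ω → ℝ) (s : Set Ω) : ℝ :=
  Exp P (fun ω => Z ω * s.indicator (fun _ => (1:ℝ)) ω) / Pr P s

/-- Covariance of two real-valued random variables. -/
def Cov (P : Measure Ω) (Z W : Ω → ℝ) : ℝ :=
  Exp P (fun ω => Z ω * W ω) - Exp P Z * Exp P W

/-- The event {D = d, A = a}. -/
def evDA (D : Ω → ℕ) (A : Ω → Fin K → ℕ) (d : ℕ) (a : Fin K → ℕ) : Set Ω :=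
  {ω | D ω = d ∧ A ω = a}

/-- The event {D = d}. -/
def evD (D : Ω → ℕ) (d : ℕ) : Set Ω := {ω | D ω = d}

/-- The event {A = a}. -/
def evA (A : Ω → Fin K → ℕ) (a : Fin K → ℕ) : Set Ω := {ω | A ω = a}

/-- π_d(a) = P(A = a | D = d). -/
def piP (P : Measure Ω) (D : Ω → ℕ) (A : Ω → Fin K → ℕ) (d : ℕ) (a : Fin K → ℕ) : ℝ :=
  Pr P (evDA D A d a) / Pr P (evD D d)

/-- The observed outcome Y = Σ_{(d,a)} Y(d,a)·1{D=d, A=a}. -/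
def Yobs (D : Ω → ℕ) (A : Ω → Fin K → ℕ) (𝒜 : Finset (Fin K → ℕ))
    (Ypot : ℕ → (Fin K → ℕ) → Ω → ℝ) : Ω → ℝ :=
  fun ω => ∑ d ∈ ({0, 1} : Finset ℕ), ∑ a ∈ 𝒜,
    Ypot d a ω * (if D ω = d ∧ A ω = a then (1:ℝ) else 0)

/-- μ(d,a) = E[Y(d,a)]. -/
def muP (P : Measure Ω) (Ypot : ℕ → (Fin K → ℕ) → Ω → ℝ) (d : ℕ) (a : Fin K → ℕ) : ℝ :=
  Exp P (Ypot d a)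

/-- The random vector (D, A) as a real-valued family indexed by Unit ⊕ Fin K. -/
def DAvec (D : Ω → ℕ) (A : Ω → Fin K → ℕ) : Unit ⊕ Fin K → Ω → ℝ :=
  Sum.elim (fun _ ω => (D ω : ℝ)) (fun j ω => (A ω j : ℝ))

/-- The (K+1)×(K+1) covariance matrix of (D, A). -/
def covDAmat (P : Measure Ω) (D : Ω → ℕ) (A : Ω → Fin K → ℕ) :
    Matrix (Unit ⊕ Fin K) (Unit ⊕ Fin K) ℝ :=
  Matrix.of fun i j => Cov P (DAvec D A i) (DAvec D A j)

/-- The K×K covariance matrix Var(A). -/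
def varAmat (P : Measure Ω) (A : Ω → Fin K → ℕ) : Matrix (Fin K) (Fin K) ℝ :=
  Matrix.of fun i j => Cov P (fun ω => (A ω i : ℝ)) (fun ω => (A ω j : ℝ))

/-- The row vector Cov(D, A). -/
def covDA (P : Measure Ω) (D : Ω → ℕ) (A : Ω → Fin K → ℕ) : Fin K → ℝ :=
  fun j => Cov P (fun ω => (D ω : ℝ)) (fun ω => (A ω j : ℝ))

/-- M = Cov(D,A) ⬝ Var(A)⁻¹. -/
def Mlong (P : Measure Ω) (D : Ω → ℕ) (A : Ω → Fin K → ℕ) : Fin K → ℝ :=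
  fun j => ∑ i, covDA P D A i * (varAmat P A)⁻¹ i j

/-- Var(D). -/
def varD (P : Measure Ω) (D : Ω → ℕ) : ℝ :=
  Cov P (fun ω => (D ω : ℝ)) (fun ω => (D ω : ℝ))

/-- denom = Var(D) − Cov(D,A)·Var(A)⁻¹·Cov(A,D). -/
def denomL (P : Measure Ω) (D : Ω → ℕ) (A : Ω → Fin K → ℕ) : ℝ :=
  varD P D - ∑ j, Mlong P D A j * covDA P D A j

/-- The long-regression weight ω_dce^l(a). -/
def wdceL (P : Measure Ω) (D : Ω → ℕ) (A : Ω → Fin K → ℕ) (a : Fin K → ℕ) : ℝ :=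
  piP P D A 1 a *
    (varD P D - Pr P (evD D 1) *
      ∑ j, Mlong P D A j * ((a j : ℝ) - Exp P (fun ω => (A ω j : ℝ)))) / denomL P D A

/-- The long-regression weight ω_ind^l(a). -/
def windL (P : Measure Ω) (D : Ω → ℕ) (A : Ω → Fin K → ℕ) (a : Fin K → ℕ) : ℝ :=
  (varD P D * (piP P D A 1 a - piP P D A 0 a) -
    Pr P (evA A a) * ∑ j, Mlong P D A j * ((a j : ℝ) - Exp P (fun ω => (A ω j : ℝ))))
  / denomL P D A

/-- The residual of the long regression of Y on (1, D, A). -/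
def residLong (D : Ω → ℕ) (A : Ω → Fin K → ℕ) (𝒜 : Finset (Fin K → ℕ))
    (Ypot : ℕ → (Fin K → ℕ) → Ω → ℝ) (Δ θ₀ : ℝ) (θ : Fin K → ℝ) : Ω → ℝ :=
  fun ω => Yobs D A 𝒜 Ypot ω - Δ * (D ω : ℝ) - θ₀ - ∑ j, θ j * (A ω j : ℝ)

/-- The random vector W = (A, A·D) as a real-valued family indexed by Fin K ⊕ Fin K. -/
def Wvec (D : Ω → ℕ) (A : Ω → Fin K → ℕ) : Fin K ⊕ Fin K → Ω → ℝ :=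
  Sum.elim (fun j ω => (A ω j : ℝ)) (fun j ω => (A ω j : ℝ) * (D ω : ℝ))

/-- The 2K×2K covariance matrix Var(W), W = (A, AD). -/
def varWmat (P : Measure Ω) (D : Ω → ℕ) (A : Ω → Fin K → ℕ) :
    Matrix (Fin K ⊕ Fin K) (Fin K ⊕ Fin K) ℝ :=
  Matrix.of fun u v => Cov P (Wvec D A u) (Wvec D A v)

/-- The row vector Cov(D, W). -/
def covDW (P : Measure Ω) (D : Ω → ℕ) (A : Ω → Fin K → ℕ) : Fin K ⊕ Fin K → ℝ :=
  fun u => Cov P (fun ω => (D ω : ℝ)) (Wvec D A u)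

/-- M = Cov(D,W) ⬝ Var(W)⁻¹ for the interaction regression. -/
def Minter (P : Measure Ω) (D : Ω → ℕ) (A : Ω → Fin K → ℕ) : Fin K ⊕ Fin K → ℝ :=
  fun v => ∑ u, covDW P D A u * (varWmat P D A)⁻¹ u v

/-- denom = Var(D) − M·Cov(W,D) for the interaction regression. -/
def denomI (P : Measure Ω) (D : Ω → ℕ) (A : Ω → Fin K → ℕ) : ℝ :=
  varD P D - ∑ v, Minter P D A v * covDW P D A v

/-- E[A_j | D = 1]. -/
def condA1 (P : Measure Ω) (D : Ω → ℕ) (A : Ω → Fin K → ℕ) (j : Fin K) : ℝ :=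
  CE P (fun ω => (A ω j : ℝ)) (evD D 1)

/-- The random vector (D, A, AD) as a real-valued family. -/
def DADvec (D : Ω → ℕ) (A : Ω → Fin K → ℕ) : Unit ⊕ (Fin K ⊕ Fin K) → Ω → ℝ :=
  Sum.elim (fun _ ω => (D ω : ℝ)) (Wvec D A)

/-- The (2K+1)×(2K+1) covariance matrix of (D, A, AD). -/
def covDADmat (P : Measure Ω) (D : Ω → ℕ) (A : Ω → Fin K → ℕ) :
    Matrix (Unit ⊕ (Fin K ⊕ Fin K)) (Unit ⊕ (Fin K ⊕ Fin K)) ℝ :=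
  Matrix.of fun i j => Cov P (DADvec D A i) (DADvec D A j)

/-- The interaction-regression weight ω_dce^i(a). -/
def wdceI (P : Measure Ω) (D : Ω → ℕ) (A : Ω → Fin K → ℕ) (a : Fin K → ℕ) : ℝ :=
  piP P D A 1 a *
    (varD P D
      - Pr P (evD D 1) *
          ∑ j, Minter P D A (Sum.inl j) * ((a j : ℝ) - Exp P (fun ω => (A ω j : ℝ)))
      - Pr P (evD D 1) *
          ∑ j, Minter P D A (Sum.inr j) * ((a j : ℝ) - Pr P (evD D 1) * condA1 P D A j))
  / denomI P D A

/-- The interaction-regression weight ω_ind^i(a). -/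
def windI (P : Measure Ω) (D : Ω → ℕ) (A : Ω → Fin K → ℕ) (a : Fin K → ℕ) : ℝ :=
  (varD P D * (piP P D A 1 a - piP P D A 0 a)
    - ∑ j, Minter P D A (Sum.inl j) * Pr P (evA A a) * ((a j : ℝ) - Exp P (fun ω => (A ω j : ℝ)))
    - Pr P (evD D 1) *
        ∑ j, Minter P D A (Sum.inr j) *
          (piP P D A 1 a * (a j : ℝ) - Pr P (evA A a) * condA1 P D A j))
  / denomI P D A

/-- The residual of the interaction regression of Y on (1, D, A, AD). -/
def residInter (D : Ω → ℕ) (A : Ω → Fin K → ℕ) (𝒜 : Finset (Fin K → ℕ))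
    (Ypot : ℕ → (Fin K → ℕ) → Ω → ℝ) (Δ θ₀ : ℝ) (θ lam : Fin K → ℝ) : Ω → ℝ :=
  fun ω => Yobs D A 𝒜 Ypot ω - Δ * (D ω : ℝ) - θ₀ - (∑ j, θ j * (A ω j : ℝ))
    - ∑ j, lam j * (A ω j : ℝ) * (D ω : ℝ)

/-- P(D = d | A = a). -/
def condDgivenA (P : Measure Ω) (D : Ω → ℕ) (A : Ω → Fin K → ℕ) (d : ℕ) (a : Fin K → ℕ) : ℝ :=
  Pr P (evDA D A d a) / Pr P (evA A a)

/-- The SFE weight ω_sfe(a). -/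
def wsfe (P : Measure Ω) (D : Ω → ℕ) (A : Ω → Fin K → ℕ) (𝒜 : Finset (Fin K → ℕ))
    (a : Fin K → ℕ) : ℝ :=
  condDgivenA P D A 1 a * condDgivenA P D A 0 a * Pr P (evA A a) /
    ∑ a' ∈ 𝒜, condDgivenA P D A 1 a' * condDgivenA P D A 0 a' * Pr P (evA A a')

/-- The residual of the SFE regression of Y on (D, {1{A=a}}). -/
def residSFE (D : Ω → ℕ) (A : Ω → Fin K → ℕ) (𝒜 : Finset (Fin K → ℕ))
    (Ypot : ℕ → (Fin K → ℕ) → Ω → ℝ) (Δ : ℝ) (θ : (Fin K → ℕ) → ℝ) : Ω → ℝ :=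
  fun ω => Yobs D A 𝒜 Ypot ω - Δ * (D ω : ℝ) -
    ∑ a ∈ 𝒜, θ a * (if A ω = a then (1:ℝ) else 0)

/-- The residual of the saturated regression of Y on ({1{A=a}}, {D·1{A=a}}). -/
def residSAT (D : Ω → ℕ) (A : Ω → Fin K → ℕ) (𝒜 : Finset (Fin K → ℕ))
    (Ypot : ℕ → (Fin K → ℕ) → Ω → ℝ) (γ Δsat : (Fin K → ℕ) → ℝ) : Ω → ℝ :=
  fun ω => Yobs D A 𝒜 Ypot ω - (∑ a ∈ 𝒜, γ a * (if A ω = a then (1:ℝ) else 0)) -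
    ∑ a ∈ 𝒜, Δsat a * (D ω : ℝ) * (if A ω = a then (1:ℝ) else 0)

/-! Since `(D, A)` takes finitely many values, every moment in the weights is a finite sum
against the joint law `P(D = d, A = a)`; in particular `Var D = P(D = 1) P(D = 0)` and
`Var D · (E[A_u | D = 1] - E[A_u | D = 0]) = Cov(D, A_u)`. After exchanging the sums over `a`
and over the coordinates `j`, the three sums reduce to `(Var D - M Cov(A, D)) / denom = 1`,
to `Cov(1, A_j) = 0` and to `M Var A = Cov(D, A)`.

Positive definiteness of the covariance matrix of `(D, A)` gives `Var D > 0`, hence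
`P(D = 0), P(D = 1) ≠ 0`, the invertibility of `Var A`, and `denom > 0` through the Schur
factorisation `det Cov(D, A) = det (Var A) · denom`. -/

theorem integral_comp_eq_sum_measureReal {α : Type*} [MeasurableSpace α]
    [MeasurableSingletonClass α] {μ : Measure Ω} [IsFiniteMeasure μ] {X : Ω → α}
    (hX : Measurable X) {S : Finset α} (hS : ∀ ω, X ω ∈ S) (f : α → ℝ) :
    ∫ ω, f (X ω) ∂μ = ∑ x ∈ S, μ.real (X ⁻¹' {x}) * f x := by
  have hfX : (fun ω => f (X ω)) = fun ω => ∑ x ∈ S, (X ⁻¹' {x}).indicator (fun _ => f x) ω := by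
    funext ω
    rw [Finset.sum_eq_single_of_mem (X ω) (hS ω) fun x _ hx => ?_]
    · simp
    · exact Set.indicator_of_notMem (Ne.symm hx) _
  have hmeas : ∀ x, MeasurableSet (X ⁻¹' {x}) := fun x => hX (measurableSet_singleton x)
  rw [hfX, integral_finsetSum _ fun x _ => (integrable_const _).indicator (hmeas x)]
  exact Finset.sum_congr rfl fun x _ => by rw [integral_indicator_const _ (hmeas x), smul_eq_mul]

theorem Cov_comm (P : Measure Ω) (Z W : Ω → ℝ) : Cov P Z W = Cov P W Z := by
  simp only [Cov, mul_comm]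

theorem Cov_const_left (P : Measure Ω) [IsProbabilityMeasure P] (c : ℝ) (Z : Ω → ℝ) :
    Cov P (fun _ => c) Z = 0 := by
  simp [Cov, Exp, integral_const_mul]

theorem sum_mul_sum_mul_comm {α ι : Type*} [Fintype ι] (s : Finset α) (c : α → ℝ)
    (m : ι → ℝ) (e : α → ι → ℝ) :
    ∑ a ∈ s, c a * ∑ j, m j * e a j = ∑ j, m j * ∑ a ∈ s, c a * e a j := by
  simp only [Finset.mul_sum]
  rw [Finset.sum_comm]
  exact Finset.sum_congr rfl fun _ _ => Finset.sum_congr rfl fun _ _ => by ring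

theorem sum_mul_piP (P : Measure Ω) (D : Ω → ℕ) (A : Ω → Fin K → ℕ) (𝒜 : Finset (Fin K → ℕ))
    (g : (Fin K → ℕ) → ℝ) (d : ℕ) :
    ∑ a ∈ 𝒜, g a * piP P D A d a = (∑ a ∈ 𝒜, Pr P (evDA D A d a) * g a) / Pr P (evD D d) := by
  simp only [piP, Finset.sum_div, mul_div_assoc', mul_comm]

section Finite

variable {P : Measure Ω} [IsProbabilityMeasure P] {D : Ω → ℕ} {A : Ω → Fin K → ℕ}
  {𝒜 : Finset (Fin K → ℕ)}

theorem exp_comp_D (hD : Measurable D) (hDbin : ∀ ω, D ω = 0 ∨ D ω = 1) (g : ℕ → ℝ) :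
    Exp P (fun ω => g (D ω)) = Pr P (evD D 0) * g 0 + Pr P (evD D 1) * g 1 := by
  rw [Exp, integral_comp_eq_sum_measureReal hD (S := {0, 1}) (by simpa using hDbin),
    Finset.sum_pair zero_ne_one]
  rfl

theorem exp_comp_A (hA : Measurable A) (hAsupp : ∀ ω, A ω ∈ 𝒜) (g : (Fin K → ℕ) → ℝ) :
    Exp P (fun ω => g (A ω)) = ∑ a ∈ 𝒜, Pr P (evA A a) * g a :=
  integral_comp_eq_sum_measureReal hA hAsupp g

theorem exp_comp_DA (hD : Measurable D) (hA : Measurable A)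
    (hDbin : ∀ ω, D ω = 0 ∨ D ω = 1) (hAsupp : ∀ ω, A ω ∈ 𝒜) (g : ℕ → (Fin K → ℕ) → ℝ) :
    Exp P (fun ω => g (D ω) (A ω)) =
      ∑ a ∈ 𝒜, (Pr P (evDA D A 0 a) * g 0 a + Pr P (evDA D A 1 a) * g 1 a) := by
  have hS : ∀ ω, (D ω, A ω) ∈ ({0, 1} : Finset ℕ) ×ˢ 𝒜 := fun ω =>
    Finset.mem_product.2 ⟨by simpa using hDbin ω, hAsupp ω⟩
  rw [Exp, integral_comp_eq_sum_measureReal (hD.prodMk hA) hS (fun x => g x.1 x.2),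
    Finset.sum_product, Finset.sum_pair zero_ne_one, ← Finset.sum_add_distrib]
  refine Finset.sum_congr rfl fun a _ => ?_
  simp only [Pr, evDA, Measure.real]
  congr <;> ext ω <;> simp [Prod.ext_iff]

theorem Pr_evD_eq_sum (hD : Measurable D) (hA : Measurable A) (hAsupp : ∀ ω, A ω ∈ 𝒜) (d : ℕ) :
    Pr P (evD D d) = ∑ a ∈ 𝒜, Pr P (evDA D A d a) := by
  have hunion : evD D d = ⋃ a ∈ 𝒜, evDA D A d a := by
    ext ω; simpa [evD, evDA] using fun _ => hAsupp ω
  have hdisj : Set.PairwiseDisjoint (𝒜 : Set (Fin K → ℕ)) (evDA D A d) :=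
    fun a _ b _ hab => Set.disjoint_left.2 fun ω h₁ h₂ => hab (h₁.2.symm.trans h₂.2)
  rw [Pr, hunion, ← Measure.real, measureReal_biUnion_finset hdisj
    fun a _ => (hD (measurableSet_singleton d)).inter (hA (measurableSet_singleton a))]
  rfl

theorem Pr_evD_zero_add_one (hD : Measurable D) (hDbin : ∀ ω, D ω = 0 ∨ D ω = 1) :
    Pr P (evD D 0) + Pr P (evD D 1) = 1 := by
  have h := exp_comp_D (P := P) hD hDbin fun _ => 1
  simp only [mul_one, Exp, integral_const, probReal_univ, smul_eq_mul] at h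
  exact h.symm

theorem varD_eq_mul (hD : Measurable D) (hDbin : ∀ ω, D ω = 0 ∨ D ω = 1) :
    varD P D = Pr P (evD D 1) * Pr P (evD D 0) := by
  rw [varD, Cov, exp_comp_D hD hDbin fun d => (d : ℝ) * d, exp_comp_D hD hDbin Nat.cast]
  push_cast
  linear_combination (-Pr P (evD D 1)) * Pr_evD_zero_add_one (P := P) hD hDbin

theorem covDA_eq_sum (hD : Measurable D) (hA : Measurable A) (hDbin : ∀ ω, D ω = 0 ∨ D ω = 1)
    (hAsupp : ∀ ω, A ω ∈ 𝒜) (j : Fin K) :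
    covDA P D A j =
      ∑ a ∈ 𝒜, Pr P (evDA D A 1 a) * ((a j : ℝ) - Exp P (fun ω => (A ω j : ℝ))) := by
  rw [covDA, Cov, exp_comp_DA hD hA hDbin hAsupp fun d a => (d : ℝ) * a j,
    exp_comp_D hD hDbin Nat.cast, Pr_evD_eq_sum hD hA hAsupp 1]
  simp only [Nat.cast_zero, Nat.cast_one, zero_mul, mul_zero, zero_add, one_mul, mul_one,
    Finset.sum_mul, ← Finset.sum_sub_distrib, mul_sub]

theorem cov_comp_A_eq_sum (hA : Measurable A) (hAsupp : ∀ ω, A ω ∈ 𝒜)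
    (g : (Fin K → ℕ) → ℝ) (j : Fin K) :
    Cov P (fun ω => g (A ω)) (fun ω => (A ω j : ℝ)) =
      ∑ a ∈ 𝒜, Pr P (evA A a) * g a * ((a j : ℝ) - Exp P (fun ω => (A ω j : ℝ))) := by
  rw [Cov, exp_comp_A hA hAsupp fun a => g a * a j, exp_comp_A hA hAsupp g, Finset.sum_mul,
    ← Finset.sum_sub_distrib]
  exact Finset.sum_congr rfl fun a _ => by ring

theorem varD_mul_sum_sub_piP (hD : Measurable D) (hA : Measurable A)
    (hDbin : ∀ ω, D ω = 0 ∨ D ω = 1) (hAsupp : ∀ ω, A ω ∈ 𝒜)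
    (h₀ : Pr P (evD D 0) ≠ 0) (h₁ : Pr P (evD D 1) ≠ 0) (u : Fin K) :
    varD P D * ∑ a ∈ 𝒜, (a u : ℝ) * (piP P D A 1 a - piP P D A 0 a) = covDA P D A u := by
  have hEDA :
      Exp P (fun ω => (D ω : ℝ) * (A ω u : ℝ)) = ∑ a ∈ 𝒜, Pr P (evDA D A 1 a) * a u := by
    simp [exp_comp_DA hD hA hDbin hAsupp fun d a => (d : ℝ) * a u]
  have hEA : Exp P (fun ω => (A ω u : ℝ)) =
      ∑ a ∈ 𝒜, Pr P (evDA D A 0 a) * a u + ∑ a ∈ 𝒜, Pr P (evDA D A 1 a) * a u := by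
    rw [exp_comp_DA hD hA hDbin hAsupp fun _ a => (a u : ℝ), Finset.sum_add_distrib]
  have hED : Exp P (fun ω => (D ω : ℝ)) = Pr P (evD D 1) := by
    simp [exp_comp_D hD hDbin Nat.cast]
  simp only [mul_sub, Finset.sum_sub_distrib, sum_mul_piP P D A 𝒜 fun a => (a u : ℝ)]
  rw [varD_eq_mul hD hDbin, covDA, Cov, hEDA, hEA, hED]
  field_simp
  linear_combination
    (∑ a ∈ 𝒜, Pr P (evDA D A 1 a) * (a u : ℝ)) * Pr_evD_zero_add_one (P := P) hD hDbin

end Finite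

section CovarianceMatrix

variable {P : Measure Ω} {D : Ω → ℕ} {A : Ω → Fin K → ℕ}

theorem covDAmat_eq_fromBlocks (P : Measure Ω) (D : Ω → ℕ) (A : Ω → Fin K → ℕ) :
    covDAmat P D A = Matrix.fromBlocks (Matrix.of fun _ _ => varD P D)
      (Matrix.of fun _ j => covDA P D A j) (Matrix.of fun i _ => covDA P D A i) (varAmat P A) := by
  ext (_ | i) (_ | j)
  · rfl
  · rfl
  · exact Cov_comm P _ _
  · rfl

theorem varD_pos_of_posDef (hPD : (covDAmat P D A).PosDef) : 0 < varD P D :=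
  hPD.diag_pos (i := Sum.inl ())

theorem varAmat_posDef (hPD : (covDAmat P D A).PosDef) : (varAmat P A).PosDef :=
  hPD.submatrix Sum.inr_injective

theorem det_covDAmat (hV : IsUnit (varAmat P A).det) :
    (covDAmat P D A).det = (varAmat P A).det * denomL P D A := by
  let := (varAmat P A).invertibleOfIsUnitDet hV
  rw [covDAmat_eq_fromBlocks, Matrix.det_fromBlocks₂₂, Matrix.invOf_eq_nonsing_inv,
    Matrix.det_unique (n := Unit)]
  simp [denomL, Mlong, Matrix.mul_apply]

theorem denomL_pos (hPD : (covDAmat P D A).PosDef) : 0 < denomL P D A := by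
  have hV := varAmat_posDef hPD
  have h := hPD.det_pos
  rw [det_covDAmat (isUnit_iff_ne_zero.2 hV.det_pos.ne')] at h
  exact pos_of_mul_pos_right h hV.det_pos.le

theorem sum_Mlong_mul_varAmat (hV : IsUnit (varAmat P A).det) (u : Fin K) :
    ∑ j, Mlong P D A j * varAmat P A u j = covDA P D A u := by
  have h : Matrix.vecMul (Mlong P D A) (varAmat P A) = covDA P D A := by
    rw [show Mlong P D A = Matrix.vecMul (covDA P D A) (varAmat P A)⁻¹ from rfl,
      Matrix.vecMul_vecMul, Matrix.nonsing_inv_mul _ hV, Matrix.vecMul_one]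
  rw [← h]
  exact Finset.sum_congr rfl fun j _ => congrArg (Mlong P D A j * ·) (Cov_comm P _ _)

end CovarianceMatrix

section Weights

variable {P : Measure Ω} [IsProbabilityMeasure P] {D : Ω → ℕ} {A : Ω → Fin K → ℕ}
  {𝒜 : Finset (Fin K → ℕ)}

theorem sum_piP_eq_one (hD : Measurable D) (hA : Measurable A) (hAsupp : ∀ ω, A ω ∈ 𝒜) {d : ℕ}
    (hd : Pr P (evD D d) ≠ 0) : ∑ a ∈ 𝒜, piP P D A d a = 1 := by
  have h := sum_mul_piP P D A 𝒜 (fun _ => 1) d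
  simp only [one_mul, mul_one] at h
  rw [h, ← Pr_evD_eq_sum hD hA hAsupp d, div_self hd]

theorem sum_wdceL (hD : Measurable D) (hA : Measurable A) (hDbin : ∀ ω, D ω = 0 ∨ D ω = 1)
    (hAsupp : ∀ ω, A ω ∈ 𝒜) (h₁ : Pr P (evD D 1) ≠ 0) :
    ∑ a ∈ 𝒜, wdceL P D A a = denomL P D A / denomL P D A := by
  have hterm : ∀ a, piP P D A 1 a * (varD P D - Pr P (evD D 1) *
      ∑ j, Mlong P D A j * ((a j : ℝ) - Exp P (fun ω => (A ω j : ℝ)))) =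
      varD P D * piP P D A 1 a - Pr P (evDA D A 1 a) *
        ∑ j, Mlong P D A j * ((a j : ℝ) - Exp P (fun ω => (A ω j : ℝ))) := by
    intro a
    rw [piP]
    field_simp
  simp only [wdceL, ← Finset.sum_div, hterm, Finset.sum_sub_distrib, ← Finset.mul_sum,
    sum_piP_eq_one hD hA hAsupp h₁, mul_one, sum_mul_sum_mul_comm,
    ← covDA_eq_sum hD hA hDbin hAsupp, denomL]

theorem sum_mul_windL (hA : Measurable A) (hAsupp : ∀ ω, A ω ∈ 𝒜) (g : (Fin K → ℕ) → ℝ) :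
    ∑ a ∈ 𝒜, g a * windL P D A a =
      (varD P D * ∑ a ∈ 𝒜, g a * (piP P D A 1 a - piP P D A 0 a) -
        ∑ j, Mlong P D A j * Cov P (fun ω => g (A ω)) (fun ω => (A ω j : ℝ))) / denomL P D A := by
  have hterm : ∀ a, g a * (varD P D * (piP P D A 1 a - piP P D A 0 a) - Pr P (evA A a) *
      ∑ j, Mlong P D A j * ((a j : ℝ) - Exp P (fun ω => (A ω j : ℝ)))) =
      varD P D * (g a * (piP P D A 1 a - piP P D A 0 a)) - Pr P (evA A a) * g a *
        ∑ j, Mlong P D A j * ((a j : ℝ) - Exp P (fun ω => (A ω j : ℝ))) := fun a => by ring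
  simp only [windL, mul_div_assoc', ← Finset.sum_div, hterm, Finset.sum_sub_distrib,
    ← Finset.mul_sum, sum_mul_sum_mul_comm, cov_comp_A_eq_sum hA hAsupp]

end Weights

theorem long_regression_weight_identities_general
    (P : Measure Ω) [IsProbabilityMeasure P]
    (D : Ω → ℕ) (A : Ω → Fin K → ℕ) (𝒜 : Finset (Fin K → ℕ))
    (hD : Measurable D) (hA : Measurable A)
    (hDbin : ∀ ω, D ω = 0 ∨ D ω = 1)
    (hAsupp : ∀ ω, A ω ∈ 𝒜)
    (hPD : (covDAmat P D A).PosDef)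
    :
    (∑ a ∈ 𝒜, wdceL P D A a) = 1
    ∧ (∑ a ∈ 𝒜, windL P D A a) = 0
    ∧ ∀ u : Fin K, (∑ a ∈ 𝒜, (a u : ℝ) * windL P D A a) = 0 := by
  have hvar : Pr P (evD D 1) * Pr P (evD D 0) ≠ 0 :=
    (varD_eq_mul (P := P) hD hDbin ▸ varD_pos_of_posDef hPD).ne'
  have h₁ : Pr P (evD D 1) ≠ 0 := left_ne_zero_of_mul hvar
  have h₀ : Pr P (evD D 0) ≠ 0 := right_ne_zero_of_mul hvar
  have hV : IsUnit (varAmat P A).det := isUnit_iff_ne_zero.2 (varAmat_posDef hPD).det_pos.ne'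
  refine ⟨?_, ?_, fun u => ?_⟩
  · rw [sum_wdceL hD hA hDbin hAsupp h₁, div_self (denomL_pos hPD).ne']
  · simpa [Cov_const_left, mul_sub, sum_piP_eq_one hD hA hAsupp h₁,
      sum_piP_eq_one hD hA hAsupp h₀] using sum_mul_windL (P := P) (D := D) hA hAsupp fun _ => 1
  · rw [sum_mul_windL hA hAsupp, varD_mul_sum_sub_piP hD hA hDbin hAsupp h₀ h₁]
    exact div_eq_zero_iff.2 (Or.inl (sub_eq_zero.2 (sum_Mlong_mul_varAmat hV u).symm))

/-- Long-regression weight identities: Σ ω_dce^l(a) = 1, Σ ω_ind^l(a) = 0, and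
Σ a_u·ω_ind^l(a) = 0 for every coordinate u. -/
theorem long_regression_weight_identities
    (P : Measure Ω) [IsProbabilityMeasure P]
    (D : Ω → ℕ) (A : Ω → Fin K → ℕ) (𝒜 : Finset (Fin K → ℕ))
    (hD : Measurable D) (hA : Measurable A)
    (hDbin : ∀ ω, D ω = 0 ∨ D ω = 1)
    (hAsupp : ∀ ω, A ω ∈ 𝒜) (h𝒜0 : (0 : Fin K → ℕ) ∈ 𝒜)
    (hpos : ∀ d ∈ ({0, 1} : Finset ℕ), ∀ a ∈ 𝒜, 0 < Pr P (evDA D A d a))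
    (hPD : (covDAmat P D A).PosDef)
    :
    (∑ a ∈ 𝒜, wdceL P D A a) = 1
    ∧ (∑ a ∈ 𝒜, windL P D A a) = 0
    ∧ ∀ u : Fin K, (∑ a ∈ 𝒜, (a u : ℝ) * windL P D A a) = 0 :=
  long_regression_weight_identities_general P D A 𝒜 hD hA hDbin hAsupp hPD
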